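/- arXiv:2212.05972 — 2 statements merged into one kernel-verified Lean document; each statement's English description precedes it below -/
import Mathlib

section
/- Let F : ℕ → ℝ and g : ℕ → ℝ be nonnegative sequences with F(k+1) ≤ F(k) - c · g(k+1)^{q} for all k, where c > 0 and q > 0, and suppose F(k) ≤ τ · g(k)^{q} for all k with τ > 0. Then F(k) ≤ (1 + c/τ)^{-k} · F(0) for all k. -/
theorem forward_descent_grad_dominated (F g : ℕ → ℝ) (c τ q : ℝ)
    (hc : 0 < c) (hq : 0 < q) (hτ : 0 < τ)
    (hF : ∀ k, 0 ≤ F k)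
    (hg : ∀ k, 0 ≤ g k)
    (hdesc : ∀ k, F (k + 1) ≤ F k - c * g (k + 1) ^ q)
    (hdom : ∀ k, F k ≤ τ * g k ^ q) :
    ∀ k, F k ≤ (1 + c / τ) ^ (-(k : ℤ)) * F 0 := by
  have hr : (0:ℝ) < 1 + c / τ := by positivity
  intro k
  induction k with
  | zero => simp
  | succ n ih =>
    have h1 : (1 + c / τ) * F (n + 1) ≤ F n := by
      have hd := hdesc n
      have hdm := hdom (n + 1)
      have : c * (F (n+1) / τ) ≤ c * g (n+1) ^ q := by
        apply mul_le_mul_of_nonneg_left _ hc.le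
        exact (div_le_iff₀ hτ).mpr (by linarith [hdm])
      have := le_trans (by linarith : F (n+1) + c * (F (n+1)/τ) ≤ F (n+1) + c * g (n+1)^q) (by linarith : F (n+1) + c * g (n+1)^q ≤ F n)
      calc (1 + c / τ) * F (n + 1) = F (n+1) + c * (F (n+1)/τ) := by ring
        _ ≤ F n := this
    have h2 : F (n + 1) ≤ (1 + c / τ)⁻¹ * F n := by
      rw [le_inv_mul_iff₀ hr]
      linarith
    calc F (n + 1) ≤ (1 + c / τ)⁻¹ * F n := h2
      _ ≤ (1 + c / τ)⁻¹ * ((1 + c / τ) ^ (-(n : ℤ)) * F 0) := by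
          exact mul_le_mul_of_nonneg_left ih (by positivity)
      _ = (1 + c / τ) ^ (-((n+1 : ℕ) : ℤ)) * F 0 := by
          rw [← zpow_neg_one, ← mul_assoc, ← zpow_add₀ hr.ne']
          push_cast; ring_nf
end

section
/- For every integer p ≥ 1 and every integer k ≥ 1, setting A(k) = k(k+1)···(k+p-1)/p! and a(k) = A(k+1) - A(k) = (k+1)(k+2)···(k+p-1)/(p-1)!, the ratio a(k)^p / A(k)^{p-1} is at most p^{2(p-1)}/(p-1)!. -/
/-!
Writing `P = (k+1)⋯(k+p-1)`, we have `A(k) = k P / p!` and `a(k) = P / (p-1)!`, so the ratio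
collapses to `P p^(p-1) / ((p-1)! k^(p-1))`. Each of the `p - 1` factors of `P` is at most
`k + p - 1 ≤ p k`, whence `P ≤ (p k)^(p-1)` and the bound follows.
-/

open Finset Nat

lemma prod_range_succ_add_eq_mul {R : Type*} [CommSemiring R] (x : R) (q : ℕ) :
    ∏ i ∈ range (q + 1), (x + i) = x * ∏ i ∈ range q, (x + 1 + i) := by
  rw [prod_range_succ', mul_comm]
  push_cast
  simp only [add_zero, add_assoc, add_comm (1 : R)]

lemma prod_range_add_one_add_le_pow {x : ℝ} (hx : 1 ≤ x) (q : ℕ) :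
    ∏ i ∈ range q, (x + 1 + i) ≤ ((q + 1) * x) ^ q := by
  calc ∏ i ∈ range q, (x + 1 + i) ≤ ∏ _i ∈ range q, ((q + 1) * x) := by
        refine prod_le_prod (fun i _ => by positivity) fun i hi => ?_
        have hiq : (i : ℝ) + 1 ≤ q := by exact_mod_cast mem_range.mp hi
        nlinarith
    _ = ((q + 1) * x) ^ q := by rw [prod_const, card_range]

lemma div_factorial_pow_div_mul_div_factorial_pow {P x : ℝ} (hP : P ≠ 0) (hx : x ≠ 0) (q : ℕ) :
    (P / q !) ^ (q + 1) / (x * P / (q + 1)!) ^ q = P * (q + 1) ^ q / (q ! * x ^ q) := by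
  have hq : (q ! : ℝ) ≠ 0 := by positivity
  rw [factorial_succ, cast_mul, div_pow, div_pow, mul_pow, mul_pow, pow_succ]
  push_cast
  field_simp
  ring

lemma mul_pow_div_factorial_mul_pow_le {P x : ℝ} (hx : 0 < x) (q : ℕ)
    (hP : P ≤ ((q + 1) * x) ^ q) :
    P * (q + 1) ^ q / (q ! * x ^ q) ≤ (q + 1) ^ (2 * q) / q ! := by
  calc P * (q + 1) ^ q / (q ! * x ^ q)
      ≤ ((q + 1) * x) ^ q * (q + 1) ^ q / (q ! * x ^ q) := by gcongr
    _ = (q + 1) ^ (2 * q) / q ! := by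
        rw [two_mul, pow_add, mul_pow]
        field_simp

theorem forward_coefficient_ratio_bound_general (p k : ℕ) (hp : 1 ≤ p) (hk : 1 ≤ k)
    (A a : ℕ → ℝ)
    (hA : ∀ m, A m = (∏ i ∈ Finset.range p, ((m : ℝ) + i)) / (Nat.factorial p))
    (ha' : ∀ m, a m =
      (∏ i ∈ Finset.range (p - 1), ((m : ℝ) + 1 + i)) / (Nat.factorial (p - 1))) :
    a k ^ p / A k ^ (p - 1) ≤ (p : ℝ) ^ (2 * (p - 1)) / (Nat.factorial (p - 1)) := by
  obtain ⟨q, rfl⟩ : ∃ q, p = q + 1 := ⟨p - 1, by omega⟩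
  have hk1 : (1 : ℝ) ≤ k := by exact_mod_cast hk
  have hP : 0 < ∏ i ∈ range q, ((k : ℝ) + 1 + i) := prod_pos fun i _ => by positivity
  rw [ha', hA, prod_range_succ_add_eq_mul, Nat.add_sub_cancel,
    div_factorial_pow_div_mul_div_factorial_pow hP.ne' (by positivity), Nat.cast_succ]
  exact mul_pow_div_factorial_mul_pow_le (by positivity) q (prod_range_add_one_add_le_pow hk1 q)

theorem forward_coefficient_ratio_bound (p k : ℕ) (hp : 1 ≤ p) (hk : 1 ≤ k)
    (A a : ℕ → ℝ)
    (hA : ∀ m, A m = (∏ i ∈ Finset.range p, ((m : ℝ) + i)) / (Nat.factorial p))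
    (ha : ∀ m, a m = A (m + 1) - A m)
    (ha' : ∀ m, a m =
      (∏ i ∈ Finset.range (p - 1), ((m : ℝ) + 1 + i)) / (Nat.factorial (p - 1))) :
    a k ^ p / A k ^ (p - 1) ≤ (p : ℝ) ^ (2 * (p - 1)) / (Nat.factorial (p - 1)) :=
  forward_coefficient_ratio_bound_general p k hp hk A a hA ha'
end
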